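/- Let f ∈ k[x,y,z] be homogeneous of degree d, char k = 0, δ = det(Hessian f). Then (d-1)·(H_yz(Δ_yz) − H_xy(Δ_xy)) = y·∂_y δ − (d-2)·δ, where Δ_yz = f_xy f_xz − f_xx f_yz, Δ_xy = f_xz f_yz − f_xy f_zz, H_yz(g) = f_z∂_y g − f_y∂_z g, H_xy(g) = f_y∂_x g − f_x∂_y g. -/

import Mathlib

/-!
Write `H` for the Hessian matrix of `f`, `A` for its adjugate and `δ = det H`. The two
cofactors in the statement are `A 2 1` and `A 0 1`. Euler's identity `(d - 1) f_j = Σ_i x_i f_ij`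
turns `(d - 1)(H_yz(A 2 1) - H_xy(A 0 1))` into `Σ_i x_i (f_iz ∂_y A 2 1 - f_iy (∂_z A 2 1 + ∂_x A 0 1)
+ f_ix ∂_y A 0 1)`, and the Piola identity `Σ_j ∂_j A j 1 = 0` simplifies this to
`Σ_i x_i Σ_j f_ij ∂_y A j 1`. Differentiating `H * A = δ • 1` with respect to `y` and applying
Euler's identity once more, now to the second derivatives of `f`, gives `y ∂_y δ - (d - 2) δ`.
-/

open MvPolynomial

noncomputable def dX {k : Type*} [CommSemiring k] (f : MvPolynomial (Fin 3) k) :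
    MvPolynomial (Fin 3) k := pderiv 0 f
noncomputable def dY {k : Type*} [CommSemiring k] (f : MvPolynomial (Fin 3) k) :
    MvPolynomial (Fin 3) k := pderiv 1 f
noncomputable def dZ {k : Type*} [CommSemiring k] (f : MvPolynomial (Fin 3) k) :
    MvPolynomial (Fin 3) k := pderiv 2 f

theorem Derivation.sum_leibniz_mul_adjugate {R A n : Type*} [CommRing R] [CommRing A]
    [Algebra R A] [Fintype n] [DecidableEq n] (D : Derivation R A A) (M : Matrix n n A)
    (i k : n) :
    ∑ j, (D (M i j) * M.adjugate j k + M i j * D (M.adjugate j k))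
      = if i = k then D M.det else 0 := by
  have h := congr(D ($(M.mul_adjugate) i k))
  simp only [Matrix.mul_apply, map_sum, Derivation.leibniz, smul_eq_mul, Matrix.smul_apply,
    Matrix.one_apply, mul_ite, mul_one, mul_zero, apply_ite D, map_zero] at h
  rw [← h]
  exact Finset.sum_congr rfl fun j _ => by ring

namespace MvPolynomial

variable {R σ : Type*} [CommRing R]

theorem pderiv_pderiv_comm (i j : σ) (f : MvPolynomial σ R) :
    pderiv i (pderiv j f) = pderiv j (pderiv i f) := by
  have h : ⁅pderiv i, pderiv j⁆ = (0 : Derivation R (MvPolynomial σ R) (MvPolynomial σ R)) :=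
    derivation_ext fun k => by
      classical
      rw [Derivation.commutator_apply]
      simp [pderiv_X, Pi.single_apply, apply_ite]
  rw [← sub_eq_zero, ← Derivation.commutator_apply, h, Derivation.zero_apply]

theorem sum_X_mul_pderiv_pderiv [Fintype σ] {g : MvPolynomial σ R} {c : R}
    (h : ∑ i, X i * pderiv i g = C c * g) (j : σ) :
    ∑ i, X i * pderiv i (pderiv j g) = C (c - 1) * pderiv j g := by
  classical
  have hj := congr(pderiv j $h)
  simp only [map_sum, Derivation.leibniz, smul_eq_mul, pderiv_X, Finset.sum_add_distrib,
    pderiv_pderiv_comm j] at hj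
  simpa [Pi.single_apply, sub_mul, eq_sub_iff_add_eq] using hj

noncomputable def hessian (f : MvPolynomial σ R) : Matrix σ σ (MvPolynomial σ R) :=
  Matrix.of fun i j => pderiv i (pderiv j f)

theorem hessian_apply_comm (f : MvPolynomial σ R) (i j : σ) :
    hessian f i j = hessian f j i :=
  pderiv_pderiv_comm i j f

theorem sum_X_mul_hessian_mul_pderiv_adjugate [Fintype σ] [DecidableEq σ]
    {f : MvPolynomial σ R} {c : R} (h : ∑ i, X i * pderiv i f = C c * f) (k : σ) :
    ∑ i, X i * ∑ j, hessian f i j * pderiv k ((hessian f).adjugate j k)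
      = X k * pderiv k (hessian f).det - C (c - 2) * (hessian f).det := by
  set H := hessian f
  set A := H.adjugate
  have euler₂ (j : σ) : ∑ i, X i * pderiv i (H j k) = C (c - 2) * H j k := by
    rw [show c - 2 = c - 1 - 1 by ring]
    exact sum_X_mul_pderiv_pderiv (sum_X_mul_pderiv_pderiv h k) j
  have third_deriv (i j : σ) : pderiv k (H i j) = pderiv i (H j k) := by
    simp only [H, hessian, Matrix.of_apply]
    rw [pderiv_pderiv_comm k i, pderiv_pderiv_comm k j]
  have hessian_symm (j : σ) : H j k = H k j := hessian_apply_comm f j k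
  calc ∑ i, X i * ∑ j, H i j * pderiv k (A j k)
      = ∑ i, X i * ((if i = k then pderiv k H.det else 0) - ∑ j, pderiv k (H i j) * A j k) := by
        refine Finset.sum_congr rfl fun i _ => congrArg _ (eq_sub_of_add_eq' ?_)
        rw [← Finset.sum_add_distrib]
        exact (pderiv k).sum_leibniz_mul_adjugate H i k
    _ = X k * pderiv k H.det - ∑ j, (∑ i, X i * pderiv i (H j k)) * A j k := by
        simp only [mul_sub, Finset.sum_sub_distrib, mul_ite, mul_zero, Finset.sum_ite_eq',
          Finset.mem_univ, if_true, Finset.mul_sum, Finset.sum_mul, third_deriv, mul_assoc]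
        rw [Finset.sum_comm]
    _ = X k * pderiv k H.det - C (c - 2) * ∑ j, H k j * A j k := by
        simp only [euler₂]
        simp only [hessian_symm, Finset.mul_sum, mul_assoc]
    _ = X k * pderiv k H.det - C (c - 2) * H.det := by
        rw [← Matrix.mul_apply, Matrix.mul_adjugate]
        simp

/-- The Piola identity: the cofactor matrix of a Hessian is divergence free. -/
theorem sum_pderiv_adjugate_hessian_fin_three (f : MvPolynomial (Fin 3) R) (k : Fin 3) :
    ∑ j, pderiv j ((hessian f).adjugate j k) = 0 := by
  fin_cases k <;>
  simp only [hessian, Matrix.adjugate_fin_three, Matrix.of_apply, Matrix.cons_val',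
    Matrix.cons_val, Matrix.cons_val_zero, Matrix.cons_val_one, Matrix.cons_val_fin_one,
    Fin.sum_univ_three, Fin.zero_eta, Fin.mk_one, Fin.reduceFinMk, Fin.isValue, map_add,
    map_sub, map_neg, Derivation.leibniz, smul_eq_mul, pderiv_pderiv_comm] <;>
  ring

/-- `hamiltonian f i j` is the Hamiltonian derivation `H_ij = f_j ∂_i - f_i ∂_j` of `f`. -/
noncomputable def hamiltonian (f : MvPolynomial σ R) (i j : σ) (g : MvPolynomial σ R) :
    MvPolynomial σ R :=
  pderiv j f * pderiv i g - pderiv i f * pderiv j g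

theorem hamiltonian_adjugate_hessian_fin_three {f : MvPolynomial (Fin 3) R} {c : R}
    (h : ∑ i, X i * pderiv i f = C c * f) :
    C (c - 1) * (hamiltonian f 1 2 ((hessian f).adjugate 2 1)
        - hamiltonian f 0 1 ((hessian f).adjugate 0 1))
      = X 1 * pderiv 1 (hessian f).det - C (c - 2) * (hessian f).det := by
  rw [← sum_X_mul_hessian_mul_pderiv_adjugate h 1]
  have euler₁ (j : Fin 3) : ∑ i, X i * hessian f i j = C (c - 1) * pderiv j f :=
    sum_X_mul_pderiv_pderiv h j
  have piola := sum_pderiv_adjugate_hessian_fin_three f 1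
  simp only [Fin.sum_univ_three, hamiltonian] at euler₁ piola ⊢
  linear_combination (-pderiv 1 ((hessian f).adjugate 2 1)) * euler₁ 2
    + (pderiv 2 ((hessian f).adjugate 2 1) + pderiv 0 ((hessian f).adjugate 0 1)) * euler₁ 1
    - pderiv 1 ((hessian f).adjugate 0 1) * euler₁ 0
    - (X 0 * hessian f 0 1 + X 1 * hessian f 1 1 + X 2 * hessian f 2 1) * piola

end MvPolynomial

theorem stmt17_general {k : Type*} [Field k] (d : ℕ)
    (f : MvPolynomial (Fin 3) k) (hf : f.IsHomogeneous d) :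
    C ((d : k) - 1) *
        ((dZ f * dY (dY (dX f) * dZ (dX f) - dX (dX f) * dZ (dY f))
            - dY f * dZ (dY (dX f) * dZ (dX f) - dX (dX f) * dZ (dY f)))
          - (dY f * dX (dZ (dX f) * dZ (dY f) - dY (dX f) * dZ (dZ f))
            - dX f * dY (dZ (dX f) * dZ (dY f) - dY (dX f) * dZ (dZ f))))
      = X 1 * pderiv 1
            (Matrix.det (Matrix.of fun i j : Fin 3 => pderiv i (pderiv j f)))
        - C ((d : k) - 2) *
            Matrix.det (Matrix.of fun i j : Fin 3 => pderiv i (pderiv j f)) := by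
  have euler : ∑ i, X i * pderiv i f = C (d : k) * f := by
    rw [hf.sum_X_mul_pderiv, nsmul_eq_mul, map_natCast]
  have cofactor_yz :
      dY (dX f) * dZ (dX f) - dX (dX f) * dZ (dY f) = (hessian f).adjugate 2 1 := by
    simp only [dX, dY, dZ, hessian, Matrix.adjugate_fin_three, Matrix.of_apply,
      Matrix.cons_val', Matrix.cons_val, Matrix.cons_val_zero, Matrix.cons_val_one,
      Matrix.cons_val_fin_one, Fin.isValue, pderiv_pderiv_comm]
    ring
  have cofactor_xy :
      dZ (dX f) * dZ (dY f) - dY (dX f) * dZ (dZ f) = (hessian f).adjugate 0 1 := by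
    simp only [dX, dY, dZ, hessian, Matrix.adjugate_fin_three, Matrix.of_apply,
      Matrix.cons_val', Matrix.cons_val_zero, Matrix.cons_val_one,
      Matrix.cons_val_fin_one, Fin.isValue, pderiv_pderiv_comm]
    ring
  rw [cofactor_yz, cofactor_xy]
  exact hamiltonian_adjugate_hessian_fin_three euler

theorem stmt17 {k : Type*} [Field k] [CharZero k] (d : ℕ)
    (f : MvPolynomial (Fin 3) k) (hf : f.IsHomogeneous d) :
    C ((d : k) - 1) *
        ((dZ f * dY (dY (dX f) * dZ (dX f) - dX (dX f) * dZ (dY f))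
            - dY f * dZ (dY (dX f) * dZ (dX f) - dX (dX f) * dZ (dY f)))
          - (dY f * dX (dZ (dX f) * dZ (dY f) - dY (dX f) * dZ (dZ f))
            - dX f * dY (dZ (dX f) * dZ (dY f) - dY (dX f) * dZ (dZ f))))
      = X 1 * pderiv 1
            (Matrix.det (Matrix.of fun i j : Fin 3 => pderiv i (pderiv j f)))
        - C ((d : k) - 2) *
            Matrix.det (Matrix.of fun i j : Fin 3 => pderiv i (pderiv j f)) :=
  stmt17_general d f hf
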